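/- arXiv:2512.11227 — 2 statements merged into one kernel-verified Lean document; each statement's English description precedes it below -/
import Mathlib

section
/- Let T : H → H be a bounded linear operator that commutes with the representation, i.e. T ∘ ρ(g) = ρ(g) ∘ T for every g ∈ G. Each F_{s,t} is a closed T-invariant subspace of H, and the spectrum of T is the union of the spectra of the restrictions: σ(T) = ⋃_{s ∈ ZMod n₁} ⋃_{t ∈ ZMod n₂} σ(T|_{F_{s,t}}), where T|_{F_{s,t}} denotes the restriction of T to the Banach space F_{s,t}. -/
/-!
The averages `P_{s,t}` are idempotents in the algebra of bounded operators, they commute with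
every `T` that commutes with `ρ`, and by orthogonality of the characters of `G` they sum to the
identity. Hence `μ - T` is bijective iff its restriction to every range `F_{s,t}` is, and by the
open mapping theorem bijectivity of `μ - T` is the same as invertibility in `H →L[ℂ] H`.
-/

open Finset

/-- The irreducible character `τ_{s,t}` of `G = ZMod n₁ × ZMod n₂`:
`τ_{s,t}(κ, ι) = exp(2πi s κ / n₁) · exp(2πi t ι / n₂)` (well defined on residues). -/
noncomputable def tauChar (n₁ n₂ : ℕ) (s : ZMod n₁) (t : ZMod n₂)
    (g : ZMod n₁ × ZMod n₂) : ℂ :=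
  Complex.exp (2 * (Real.pi : ℂ) * Complex.I * (s.val : ℂ) * (g.1.val : ℂ) / (n₁ : ℂ)) *
    Complex.exp (2 * (Real.pi : ℂ) * Complex.I * (t.val : ℂ) * (g.2.val : ℂ) / (n₂ : ℂ))

/-- The averaging operator `P_{s,t} = (1/(n₁n₂)) Σ_{g ∈ G} τ_{s,t}(g) ρ(g)` of (4.1),
as a linear map, for a unitary representation `ρ` of `G = ZMod n₁ × ZMod n₂` on a
complex Hilbert space. -/
noncomputable def PavgL (n₁ n₂ : ℕ) [NeZero n₁] [NeZero n₂] {H : Type*}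
    [NormedAddCommGroup H] [InnerProductSpace ℂ H]
    (ρ : Multiplicative (ZMod n₁ × ZMod n₂) →* (H ≃ₗᵢ[ℂ] H))
    (s : ZMod n₁) (t : ZMod n₂) : H →ₗ[ℂ] H :=
  ((n₁ : ℂ) * (n₂ : ℂ))⁻¹ •
    ∑ g : ZMod n₁ × ZMod n₂,
      tauChar n₁ n₂ s t g • ((ρ (Multiplicative.ofAdd g)).toLinearEquiv.toLinearMap)

/-- `F_{s,t}`, the range of `P_{s,t}`, as a subspace of `H`. -/
noncomputable def Fsub (n₁ n₂ : ℕ) [NeZero n₁] [NeZero n₂] {H : Type*}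
    [NormedAddCommGroup H] [InnerProductSpace ℂ H]
    (ρ : Multiplicative (ZMod n₁ × ZMod n₂) →* (H ≃ₗᵢ[ℂ] H))
    (s : ZMod n₁) (t : ZMod n₂) : Submodule ℂ H :=
  LinearMap.range (PavgL n₁ n₂ ρ s t)

section CharAverage

variable {𝕜 G A : Type*} [Field 𝕜] [AddCommGroup G] [Fintype G] [Ring A] [Algebra 𝕜 A]
  (ρ : Multiplicative G →* A)

noncomputable def charAverage (χ : AddChar G 𝕜) : A :=
  (Fintype.card G : 𝕜)⁻¹ • ∑ g, χ g • ρ (Multiplicative.ofAdd g)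

lemma mul_charAverage (χ : AddChar G 𝕜) (h : G) :
    ρ (Multiplicative.ofAdd h) * charAverage ρ χ = χ (-h) • charAverage ρ χ := by
  have hshift : ∑ g, χ g • ρ (Multiplicative.ofAdd (h + g))
      = ∑ g, (χ (-h) * χ g) • ρ (Multiplicative.ofAdd g) :=
    Fintype.sum_equiv (Equiv.addLeft h) _ _ fun g => by
      rw [Equiv.coe_addLeft, ← AddChar.map_add_eq_mul, neg_add_cancel_left]
  simp only [charAverage, mul_smul_comm, Finset.mul_sum, ← map_mul,
    ← ofAdd_add, hshift, mul_smul, ← Finset.smul_sum]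
  exact smul_comm _ _ _

lemma isIdempotentElem_charAverage [CharZero 𝕜] (χ : AddChar G 𝕜) :
    IsIdempotentElem (charAverage ρ χ) := by
  have hχ : ∀ g, χ g * χ (-g) = 1 := fun g => by
    rw [← AddChar.map_add_eq_mul, add_neg_cancel, AddChar.map_zero_eq_one]
  have hcard : (Fintype.card G : 𝕜) ≠ 0 := Nat.cast_ne_zero.mpr Fintype.card_ne_zero
  calc charAverage ρ χ * charAverage ρ χ
      = (Fintype.card G : 𝕜)⁻¹ • ∑ g, χ g • ρ (Multiplicative.ofAdd g) * charAverage ρ χ := by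
        rw [charAverage, smul_mul_assoc, Finset.sum_mul]
    _ = (Fintype.card G : 𝕜)⁻¹ • ∑ _g : G, charAverage ρ χ := by
        simp only [smul_mul_assoc, mul_charAverage, smul_smul, hχ, one_smul]
    _ = charAverage ρ χ := by
        rw [Finset.sum_const, Finset.card_univ, ← Nat.cast_smul_eq_nsmul 𝕜, smul_smul,
          inv_mul_cancel₀ hcard, one_smul]

lemma commute_charAverage (χ : AddChar G 𝕜) {a : A} (ha : ∀ g, Commute a (ρ g)) :
    Commute a (charAverage ρ χ) :=
  .smul_right (.sum_right _ _ _ fun _ _ => (ha _).smul_right _) _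

lemma sum_charAverage [CharZero 𝕜] {ι : Type*} [Fintype ι] (χ : ι → AddChar G 𝕜)
    (hcard : Fintype.card ι = Fintype.card G) (horth : ∀ g ≠ 0, ∑ i, χ i g = 0) :
    ∑ i, charAverage ρ (χ i) = 1 := by
  have hG : (Fintype.card G : 𝕜) ≠ 0 := Nat.cast_ne_zero.mpr Fintype.card_ne_zero
  calc ∑ i, charAverage ρ (χ i)
      = (Fintype.card G : 𝕜)⁻¹ • ∑ g, (∑ i, χ i g) • ρ (Multiplicative.ofAdd g) := by
        simp only [charAverage, ← Finset.smul_sum, Finset.sum_smul]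
        rw [Finset.sum_comm]
    _ = (Fintype.card G : 𝕜)⁻¹ • (Fintype.card G : 𝕜) • ρ (Multiplicative.ofAdd 0) := by
        rw [Finset.sum_eq_single 0 (fun g _ hg => by rw [horth g hg, zero_smul])
          (fun h => absurd (Finset.mem_univ 0) h)]
        simp [hcard]
    _ = 1 := by rw [smul_smul, inv_mul_cancel₀ hG, one_smul, ofAdd_zero, map_one]

end CharAverage

section RestrictToRanges

open LinearMap

variable {R M : Type*} [Ring R] [AddCommGroup M] [Module R M]

lemma Module.End.apply_apply_of_commute {f p : Module.End R M} (h : Commute f p) (x : M) :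
    f (p x) = p (f x) :=
  LinearMap.congr_fun h.eq x

lemma Module.End.apply_mem_range_of_commute {f p : Module.End R M} (h : Commute f p) :
    ∀ x ∈ range p, f x ∈ range p := by
  rintro _ ⟨y, rfl⟩
  exact ⟨f y, (apply_apply_of_commute h y).symm⟩

lemma Module.End.bijective_restrict_range_of_commute {f p : Module.End R M}
    (hp : IsIdempotentElem p) (h : Commute f p) (hf : Function.Bijective f) :
    Function.Bijective (f.restrict (apply_mem_range_of_commute h)) := by
  refine ⟨fun x y hxy => Subtype.ext (hf.1 (congrArg Subtype.val hxy)), fun y => ?_⟩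
  obtain ⟨x, hx⟩ := hf.2 y
  refine ⟨⟨p x, x, rfl⟩, Subtype.ext ?_⟩
  change f (p x) = y
  obtain ⟨z, hz⟩ := y.2
  rw [apply_apply_of_commute h, hx, ← hz, ← Module.End.mul_apply, hp.eq]

variable {ι : Type*} [Fintype ι] {P : ι → Module.End R M}

lemma Module.End.bijective_iff_forall_bijective_restrict_range (hsum : ∑ i, P i = 1)
    (hP : ∀ i, IsIdempotentElem (P i)) {f : Module.End R M} (hf : ∀ i, Commute f (P i)) :
    Function.Bijective f ↔
      ∀ i, Function.Bijective (f.restrict (apply_mem_range_of_commute (hf i))) := by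
  have hdecomp : ∀ x, ∑ i, P i x = x := fun x => by
    rw [← LinearMap.sum_apply, hsum, Module.End.one_apply]
  refine ⟨fun hbij i => bijective_restrict_range_of_commute (hP i) (hf i) hbij,
    fun hres => ⟨(injective_iff_map_eq_zero f).mpr fun x hx => ?_, fun y => ?_⟩⟩
  · have hPx : ∀ i, P i x = 0 := fun i => by
      have h0 : f.restrict (apply_mem_range_of_commute (hf i)) ⟨P i x, x, rfl⟩ = 0 :=
        Subtype.ext <| by
          change f (P i x) = 0
          rw [apply_apply_of_commute (hf i), hx, map_zero]
      exact congrArg Subtype.val ((injective_iff_map_eq_zero _).mp (hres i).1 _ h0)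
    rw [← hdecomp x]
    exact Finset.sum_eq_zero fun i _ => hPx i
  · choose x hx using fun i => (hres i).2 ⟨P i y, y, rfl⟩
    refine ⟨∑ i, (x i : M), ?_⟩
    rw [map_sum, ← hdecomp y]
    exact Finset.sum_congr rfl fun i _ => congrArg Subtype.val (hx i)

end RestrictToRanges

open LinearMap in
lemma Module.End.spectrum_eq_iUnion_spectrum_restrict_range {R M ι : Type*} [CommRing R]
    [AddCommGroup M] [Module R M] [Fintype ι] {P : ι → Module.End R M} (hsum : ∑ i, P i = 1)
    (hP : ∀ i, IsIdempotentElem (P i)) {f : Module.End R M} (hf : ∀ i, Commute f (P i)) :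
    spectrum R f =
      ⋃ i, spectrum R (f.restrict (apply_mem_range_of_commute (hf i))) := by
  ext μ
  have hshift : ∀ i, Commute (algebraMap R (Module.End R M) μ - f) (P i) := fun i =>
    (Algebra.commute_algebraMap_left μ (P i)).sub_left (hf i)
  have hrestrict : ∀ i, algebraMap R _ μ - f.restrict (apply_mem_range_of_commute (hf i)) =
      (algebraMap R _ μ - f).restrict (apply_mem_range_of_commute (hshift i)) := fun i => by
    ext; rfl
  simp only [Set.mem_iUnion, spectrum.mem_iff, Module.End.isUnit_iff, hrestrict,
    bijective_iff_forall_bijective_restrict_range hsum hP hshift, not_forall]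

open ZMod in
lemma tauChar_eq_stdAddChar (n₁ n₂ : ℕ) [NeZero n₁] [NeZero n₂] (s : ZMod n₁) (t : ZMod n₂)
    (g : ZMod n₁ × ZMod n₂) :
    tauChar n₁ n₂ s t g = stdAddChar (s * g.1) * stdAddChar (t * g.2) := by
  have hval : ∀ {n : ℕ} [NeZero n] (a b : ZMod n), a * b = ((a.val * b.val : ℕ) : ZMod n) :=
    fun a b => by rw [Nat.cast_mul, natCast_zmod_val, natCast_zmod_val]
  rw [hval s, hval t, stdAddChar_apply, stdAddChar_apply, toCircle_natCast, toCircle_natCast,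
    tauChar]
  push_cast
  ring_nf

noncomputable def tauAddChar (n₁ n₂ : ℕ) [NeZero n₁] [NeZero n₂] (s : ZMod n₁) (t : ZMod n₂) :
    AddChar (ZMod n₁ × ZMod n₂) ℂ where
  toFun := tauChar n₁ n₂ s t
  map_zero_eq_one' := by simp [tauChar_eq_stdAddChar]
  map_add_eq_mul' a b := by
    simp only [tauChar_eq_stdAddChar, Prod.fst_add, Prod.snd_add, mul_add,
      AddChar.map_add_eq_mul]
    ring

lemma sum_tauChar_eq_zero (n₁ n₂ : ℕ) [NeZero n₁] [NeZero n₂] {g : ZMod n₁ × ZMod n₂}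
    (hg : g ≠ 0) : ∑ i : ZMod n₁ × ZMod n₂, tauChar n₁ n₂ i.1 i.2 g = 0 := by
  simp only [Fintype.sum_prod_type, tauChar_eq_stdAddChar, ← Finset.sum_mul_sum,
    AddChar.sum_mulShift _ (ZMod.isPrimitive_stdAddChar _)]
  by_cases h₁ : g.1 = 0
  · simp [h₁, show g.2 ≠ 0 from fun h₂ => hg (Prod.ext h₁ h₂)]
  · simp [h₁]

@[simps]
def LinearIsometryEquiv.toContinuousLinearMapHom {R E : Type*} [Semiring R]
    [SeminormedAddCommGroup E] [Module R E] : (E ≃ₗᵢ[R] E) →* (E →L[R] E) where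
  toFun e := e.toContinuousLinearEquiv
  map_one' := rfl
  map_mul' _ _ := rfl

section Averaging

variable (n₁ n₂ : ℕ) [NeZero n₁] [NeZero n₂] {H : Type*}
  [NormedAddCommGroup H] [InnerProductSpace ℂ H]
  (ρ : Multiplicative (ZMod n₁ × ZMod n₂) →* (H ≃ₗᵢ[ℂ] H))

lemma PavgL_eq_charAverage (s : ZMod n₁) (t : ZMod n₂) :
    PavgL n₁ n₂ ρ s t =
      (charAverage (LinearIsometryEquiv.toContinuousLinearMapHom.comp ρ)
        (tauAddChar n₁ n₂ s t) : H →L[ℂ] H) := by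
  ext f
  simp [PavgL, charAverage, tauAddChar, ZMod.card]

lemma isIdempotentElem_PavgL (s : ZMod n₁) (t : ZMod n₂) :
    IsIdempotentElem (PavgL n₁ n₂ ρ s t) := by
  rw [PavgL_eq_charAverage]
  exact ContinuousLinearMap.IsIdempotentElem.toLinearMap (isIdempotentElem_charAverage _ _)

lemma sum_PavgL : ∑ i : ZMod n₁ × ZMod n₂, PavgL n₁ n₂ ρ i.1 i.2 = 1 := by
  have hsum := sum_charAverage (LinearIsometryEquiv.toContinuousLinearMapHom.comp ρ)
    (fun i : ZMod n₁ × ZMod n₂ => tauAddChar n₁ n₂ i.1 i.2) rfl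
    fun _ hg => sum_tauChar_eq_zero n₁ n₂ hg
  simp only [PavgL_eq_charAverage, ← ContinuousLinearMap.toLinearMap_sum, hsum,
    ContinuousLinearMap.toLinearMap_one]

lemma commute_PavgL (T : H →L[ℂ] H)
    (hT : ∀ (g : ZMod n₁ × ZMod n₂) (f : H),
      T (ρ (Multiplicative.ofAdd g) f) = ρ (Multiplicative.ofAdd g) (T f))
    (s : ZMod n₁) (t : ZMod n₂) :
    Commute (T : Module.End ℂ H) (PavgL n₁ n₂ ρ s t) := by
  rw [PavgL_eq_charAverage]
  refine .map (commute_charAverage (𝕜 := ℂ) _ _ fun g => ?_)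
    ContinuousLinearMap.toLinearMapRingHom
  exact ContinuousLinearMap.ext (hT (Multiplicative.toAdd g))

lemma isClosed_Fsub (s : ZMod n₁) (t : ZMod n₂) :
    IsClosed (Fsub n₁ n₂ ρ s t : Set H) := by
  rw [Fsub, PavgL_eq_charAverage]
  exact ContinuousLinearMap.IsIdempotentElem.isClosed_range (isIdempotentElem_charAverage _ _)

end Averaging

/-- **Theorem 4.4 and its Remark (abstract form)**: if a bounded operator `T` commutes
with the representation, then each `F_{s,t}` is a closed `T`-invariant subspace and
`σ(T) = ⋃_{s,t} σ(T|_{F_{s,t}})`. -/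
theorem spectrum_decomposition (n₁ n₂ : ℕ) [NeZero n₁] [NeZero n₂] {H : Type*}
    [NormedAddCommGroup H] [InnerProductSpace ℂ H] [CompleteSpace H]
    (ρ : Multiplicative (ZMod n₁ × ZMod n₂) →* (H ≃ₗᵢ[ℂ] H))
    (T : H →L[ℂ] H)
    (hT : ∀ (g : ZMod n₁ × ZMod n₂) (f : H),
      T (ρ (Multiplicative.ofAdd g) f) = ρ (Multiplicative.ofAdd g) (T f)) :
    (∀ (s : ZMod n₁) (t : ZMod n₂), IsClosed ((Fsub n₁ n₂ ρ s t : Submodule ℂ H) : Set H)) ∧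
    ∃ hinv : ∀ (s : ZMod n₁) (t : ZMod n₂) (f : H),
        f ∈ Fsub n₁ n₂ ρ s t → T f ∈ Fsub n₁ n₂ ρ s t,
      spectrum ℂ T = ⋃ (s : ZMod n₁), ⋃ (t : ZMod n₂),
        spectrum ℂ ((T : H →ₗ[ℂ] H).restrict (hinv s t)) := by
  have hcomm : ∀ i : ZMod n₁ × ZMod n₂, Commute (T : Module.End ℂ H) (PavgL n₁ n₂ ρ i.1 i.2) :=
    fun i => commute_PavgL n₁ n₂ ρ T hT i.1 i.2
  refine ⟨isClosed_Fsub n₁ n₂ ρ,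
    fun s t => Module.End.apply_mem_range_of_commute (hcomm (s, t)), ?_⟩
  rw [ContinuousLinearMap.spectrum_eq]
  exact (Module.End.spectrum_eq_iUnion_spectrum_restrict_range (sum_PavgL n₁ n₂ ρ)
    (fun i => isIdempotentElem_PavgL n₁ n₂ ρ i.1 i.2) hcomm).trans (Set.iUnion_prod' _)
end

section
/- Let n₁, n₂ ≥ 3 be coprime positive integers. Let C(n) denote the cycle graph on ZMod n (the simple graph on ZMod n in which i and j are adjacent iff i ≠ j and i − j = 1 or i − j = −1), and let Circ denote the circulant graph on ZMod (n₁·n₂) in which i and j are adjacent iff i ≠ j and i − j ∈ {n₁, −n₁, n₂, −n₂}. Then the box product (Cartesian product) of simple graphs C(n₁) □ C(n₂) is isomorphic to Circ, via the map (κ, ι) ↦ κ·n₂ + ι·n₁. -/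
/-- The cycle graph on `ZMod n`: `i` and `j` are adjacent iff `i ≠ j` and
`i − j = ±1`. -/
def cycleGraph (n : ℕ) : SimpleGraph (ZMod n) where
  Adj i j := i ≠ j ∧ (i - j = 1 ∨ i - j = -1)
  symm := ⟨by
    rintro i j ⟨hne, h | h⟩
    · exact ⟨hne.symm, Or.inr (by rw [← neg_sub, h])⟩
    · exact ⟨hne.symm, Or.inl (by rw [← neg_sub, h, neg_neg])⟩⟩
  loopless := ⟨fun i h => h.1 rfl⟩

/-- The circulant graph `C_{n₁n₂}(n₁, n₂)` on `ZMod (n₁·n₂)`: `i` and `j` are adjacent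
iff `i ≠ j` and `i − j ∈ {±n₁, ±n₂}`. -/
def circulantGraph (n₁ n₂ : ℕ) : SimpleGraph (ZMod (n₁ * n₂)) where
  Adj i j := i ≠ j ∧ (i - j = (n₁ : ZMod (n₁ * n₂)) ∨ i - j = -(n₁ : ZMod (n₁ * n₂)) ∨
    i - j = (n₂ : ZMod (n₁ * n₂)) ∨ i - j = -(n₂ : ZMod (n₁ * n₂)))
  symm := ⟨by
    rintro i j ⟨hne, h | h | h | h⟩
    · exact ⟨hne.symm, Or.inr (Or.inl (by rw [← neg_sub, h]))⟩
    · exact ⟨hne.symm, Or.inl (by rw [← neg_sub, h, neg_neg])⟩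
    · exact ⟨hne.symm, Or.inr (Or.inr (Or.inr (by rw [← neg_sub, h])))⟩
    · exact ⟨hne.symm, Or.inr (Or.inr (Or.inl (by rw [← neg_sub, h, neg_neg])))⟩⟩
  loopless := ⟨fun i h => h.1 rfl⟩

/-!
The cycle on `ZMod n` is the circulant graph with jumps `{1}`, and a box product of circulant
graphs on `G` and `H` is the circulant graph on `G × H` with jumps `s × {0} ∪ {0} × t`; an
additive isomorphism carries a circulant graph to the circulant graph with the image jumps.
For coprime `n₁, n₂` the homomorphism `(κ, ι) ↦ κ n₂ + ι n₁` is injective, since reducing it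
modulo `n₁` gives `κ n₂` with `n₂` a unit, hence bijective by counting, and it sends the jumps
`(1, 0), (0, 1)` to `n₂, n₁`.
-/

namespace ZMod

variable {n : ℕ} {A : Type*} [AddCommGroup A]

def liftOfNsmulEqZero (x : A) (hx : n • x = 0) : ZMod n →+ A :=
  ZMod.lift n ⟨zmultiplesHom A x, by simpa [natCast_zsmul] using hx⟩

theorem liftOfNsmulEqZero_intCast (x : A) (hx : n • x = 0) (k : ℤ) :
    liftOfNsmulEqZero x hx k = k • x :=
  lift_coe n _ k

theorem liftOfNsmulEqZero_one (x : A) (hx : n • x = 0) : liftOfNsmulEqZero x hx 1 = x := by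
  simpa using liftOfNsmulEqZero_intCast x hx 1

theorem liftOfNsmulEqZero_apply [NeZero n] (x : A) (hx : n • x = 0) (a : ZMod n) :
    liftOfNsmulEqZero x hx a = a.val • x := by
  have := liftOfNsmulEqZero_intCast x hx a.val
  rwa [Int.cast_natCast, natCast_zmod_val, natCast_zsmul] at this

variable (n₁ n₂ : ℕ)

def prodToMul : ZMod n₁ × ZMod n₂ →+ ZMod (n₁ * n₂) :=
  (liftOfNsmulEqZero (n₂ : ZMod (n₁ * n₂))
      (by rw [nsmul_eq_mul, ← Nat.cast_mul, natCast_self])).coprod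
    (liftOfNsmulEqZero (n₁ : ZMod (n₁ * n₂))
      (by rw [nsmul_eq_mul, ← Nat.cast_mul, mul_comm, natCast_self]))

theorem prodToMul_one_zero : prodToMul n₁ n₂ (1, 0) = n₂ := by
  simp [prodToMul, liftOfNsmulEqZero_one]

theorem prodToMul_zero_one : prodToMul n₁ n₂ (0, 1) = n₁ := by
  simp [prodToMul, liftOfNsmulEqZero_one]

variable [NeZero n₁] [NeZero n₂]

theorem prodToMul_apply (p : ZMod n₁ × ZMod n₂) :
    prodToMul n₁ n₂ p = p.1.val * n₂ + p.2.val * n₁ := by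
  simp [prodToMul, liftOfNsmulEqZero_apply]

theorem castHom_prodToMul_fst (p : ZMod n₁ × ZMod n₂) :
    castHom (dvd_mul_right n₁ n₂) (ZMod n₁) (prodToMul n₁ n₂ p) = p.1 * n₂ := by
  simp only [prodToMul_apply, map_add, map_mul, map_natCast, natCast_zmod_val, natCast_self,
    mul_zero, add_zero]

theorem castHom_prodToMul_snd (p : ZMod n₁ × ZMod n₂) :
    castHom (dvd_mul_left n₂ n₁) (ZMod n₂) (prodToMul n₁ n₂ p) = p.2 * n₁ := by
  simp only [prodToMul_apply, map_add, map_mul, map_natCast, natCast_zmod_val, natCast_self,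
    mul_zero, zero_add]

variable {n₁ n₂}

theorem prodToMul_injective (h : n₁.Coprime n₂) : Function.Injective (prodToMul n₁ n₂) := by
  refine (injective_iff_map_eq_zero _).mpr fun p hp => Prod.ext ?_ ?_
  · have := castHom_prodToMul_fst n₁ n₂ p
    rw [hp, map_zero] at this
    exact ((isUnit_iff_coprime n₂ n₁).mpr h.symm).mul_left_eq_zero.mp this.symm
  · have := castHom_prodToMul_snd n₁ n₂ p
    rw [hp, map_zero] at this
    exact ((isUnit_iff_coprime n₁ n₂).mpr h).mul_left_eq_zero.mp this.symm

noncomputable def prodAddEquivMul (h : n₁.Coprime n₂) : ZMod n₁ × ZMod n₂ ≃+ ZMod (n₁ * n₂) :=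
  AddEquiv.ofBijective (prodToMul n₁ n₂) <|
    (Fintype.bijective_iff_injective_and_card _).mpr
      ⟨prodToMul_injective h, by simp [ZMod.card]⟩

end ZMod

namespace SimpleGraph

variable {G H : Type*} [AddGroup G] [AddGroup H]

theorem circulantGraph_boxProd_circulantGraph (s : Set G) (t : Set H) :
    (circulantGraph s □ circulantGraph t) = circulantGraph (s ×ˢ {0} ∪ {0} ×ˢ t) := by
  ext ⟨a, b⟩ ⟨c, d⟩
  simp only [boxProd_adj, circulantGraph_adj, Prod.mk_sub_mk, Set.mem_union, Set.mem_prod,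
    Set.mem_singleton_iff, sub_eq_zero, Prod.mk.injEq]
  grind

def circulantGraphIso (e : G ≃+ H) (s : Set G) : circulantGraph s ≃g circulantGraph (e '' s) :=
  ⟨e.toEquiv, fun {a b} => by simp [circulantGraph_adj, ← map_sub]⟩

end SimpleGraph

theorem cycleGraph_eq_circulantGraph (n : ℕ) :
    cycleGraph n = SimpleGraph.circulantGraph {1} := by
  ext i j
  simp only [cycleGraph, SimpleGraph.circulantGraph_adj, Set.mem_singleton_iff]
  rw [← neg_sub i j, neg_eq_iff_eq_neg]

theorem circulantGraph_eq_circulantGraph_pair (n₁ n₂ : ℕ) :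
    circulantGraph n₁ n₂ =
      SimpleGraph.circulantGraph {(n₁ : ZMod (n₁ * n₂)), (n₂ : ZMod (n₁ * n₂))} := by
  ext i j
  simp only [circulantGraph, SimpleGraph.circulantGraph_adj, Set.mem_insert_iff,
    Set.mem_singleton_iff]
  rw [← neg_sub i j, neg_eq_iff_eq_neg, neg_eq_iff_eq_neg]
  tauto

/-- **`C_{n₁n₂}(n₁,n₂) ≅ Γ_{n₁} □ Γ_{n₂}` for coprime `n₁, n₂`** (Theorem 3.1 of [16],
used in Section 4): the Cartesian (box) product of the cycles on `n₁` and `n₂` vertices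
is isomorphic to the circulant graph `C_{n₁n₂}(n₁, n₂)`, via `(κ, ι) ↦ κ·n₂ + ι·n₁`. -/
theorem cycle_boxProd_iso_circulant (n₁ n₂ : ℕ) (h₁ : 3 ≤ n₁) (h₂ : 3 ≤ n₂)
    (h : Nat.gcd n₁ n₂ = 1) :
    ∃ e : (cycleGraph n₁ □ cycleGraph n₂) ≃g circulantGraph n₁ n₂,
      ∀ p : ZMod n₁ × ZMod n₂,
        e p = ((p.1.val : ZMod (n₁ * n₂)) * (n₂ : ZMod (n₁ * n₂))
              + (p.2.val : ZMod (n₁ * n₂)) * (n₁ : ZMod (n₁ * n₂))) := by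
  have : NeZero n₁ := ⟨by omega⟩
  have : NeZero n₂ := ⟨by omega⟩
  have hgen : ZMod.prodAddEquivMul h '' ({1} ×ˢ {0} ∪ {0} ×ˢ {1}) =
      {(n₁ : ZMod (n₁ * n₂)), ↑n₂} := by
    simp [ZMod.prodAddEquivMul, Set.image_insert_eq, ZMod.prodToMul_one_zero,
      ZMod.prodToMul_zero_one, Set.pair_comm]
  rw [cycleGraph_eq_circulantGraph, cycleGraph_eq_circulantGraph,
    SimpleGraph.circulantGraph_boxProd_circulantGraph, circulantGraph_eq_circulantGraph_pair,
    ← hgen]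
  exact ⟨SimpleGraph.circulantGraphIso _ _, ZMod.prodToMul_apply n₁ n₂⟩
end
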